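/- arXiv:2011.14404 — 5 statements merged into one kernel-verified Lean document; each statement's English description precedes it below -/
import Mathlib

section
/- Let A = (Σ, Q, δ) be a semi-automaton with n states, m letters of rank n-1, and n > m. Then every subset of Q of size n-1 is reachable from Q if and only if there is at least one letter of rank n-1 and the permutation group G generated by the permutational letters is such that every state of Q lies in the G-orbit of some state s_i, where for each rank-(n-1) letter a_i, s_i is the unique state not in δ(Q, a_i). -/
open Finset

universe u v

variable {Q : Type u} {A : Type v}

/-- Extended transition function on words (lists of letters). -/
def dw (δ : Q → A → Q) (q : Q) (w : List A) : Q := w.foldl δ q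

/-- A subset `S` of the state set is reachable if it is the image of the
full state set under some word. -/
def reach [Fintype Q] [DecidableEq Q] (δ : Q → A → Q) (S : Finset Q) : Prop :=
  ∃ w : List A, Finset.univ.image (fun q => dw δ q w) = S

/-- Rank of a word: cardinality of the image of the state set under it. -/
def rkw [Fintype Q] [DecidableEq Q] (δ : Q → A → Q) (w : List A) : ℕ :=
  (Finset.univ.image (fun q => dw δ q w)).card

/-- Rank of a letter. -/
def rkl [Fintype Q] [DecidableEq Q] (δ : Q → A → Q) (a : A) : ℕ :=
  (Finset.univ.image (fun q => δ q a)).card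

/-- A map is a cyclic permutation with a single orbit. -/
def isCyclicPerm (f : Q → Q) : Prop :=
  Function.Bijective f ∧ ∀ p q : Q, ∃ k : ℕ, f^[k] p = q

/-- Two subsets of states are distinguishable in the power automaton:
some word maps exactly one of them to a singleton. -/
def distinguishable [DecidableEq Q] (δ : Q → A → Q) (S T : Finset Q) : Prop :=
  ∃ u : List A,
    Xor' ((S.image (fun q => dw δ q u)).card = 1)
         ((T.image (fun q => dw δ q u)).card = 1)

/-- The set of synchronizing words. -/
def Syn [Fintype Q] [DecidableEq Q] (δ : Q → A → Q) : Set (List A) :=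
  {w | (Finset.univ.image (fun q => dw δ q w)).card = 1}

/-- The Nerode right-congruence of a language. -/
def nerode (L : Set (List A)) : Setoid (List A) where
  r u v := ∀ x : List A, u ++ x ∈ L ↔ v ++ x ∈ L
  iseqv := ⟨fun _ _ => Iff.rfl, fun h x => (h x).symm, fun h1 h2 x => (h1 x).trans (h2 x)⟩

/-- State complexity of a language: number of Nerode classes. -/
noncomputable def sc (L : Set (List A)) : ℕ := Nat.card (Quotient (nerode L))

/-- Complete reachability. -/
def complReach [Fintype Q] [DecidableEq Q] (δ : Q → A → Q) : Prop :=
  ∀ S : Finset Q, S.Nonempty → ∃ w : List A, Finset.univ.image (fun q => dw δ q w) = S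

/-- The permutation group generated by the permutational letters. -/
def permGroup [Fintype Q] [DecidableEq Q] (δ : Q → A → Q) : Subgroup (Equiv.Perm Q) :=
  Subgroup.closure {π : Equiv.Perm Q | ∃ a : A, ∀ q : Q, π q = δ q a}

/-!
If the image of a word misses exactly one state `q`, look at its last letter that is not a
permutation: that letter already has image `Q \ {s}` for some `s`, and the permutational letters
after it carry `s` to `q`. Conversely, such a letter followed by a word acting as `g ∈ G` has
image `Q \ {g s}`; every `g ∈ G` is realized by a word because in a finite group the inverse of
an element is one of its positive powers, so `G` is the monoid generated by the permutational
letters.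
-/

lemma dw_append (δ : Q → A → Q) (q : Q) (w₁ w₂ : List A) :
    dw δ q (w₁ ++ w₂) = dw δ (dw δ q w₁) w₂ :=
  List.foldl_append

lemma image_dw_append_singleton [DecidableEq Q] (δ : Q → A → Q) (S : Finset Q) (w : List A)
    (b : A) :
    S.image (fun p => dw δ p (w ++ [b])) = (S.image (fun p => dw δ p w)).image (δ · b) := by
  rw [image_image]
  exact image_congr fun p _ => dw_append δ p w [b]

section

variable [Fintype Q] [DecidableEq Q]

lemma image_univ_sdiff_singleton_perm (g : Equiv.Perm Q) (s : Q) :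
    (univ \ {s}).image g = univ \ {g s} := by
  rw [image_sdiff _ _ g.injective, image_univ_equiv, image_singleton]

lemma card_univ_sdiff_singleton (q : Q) : (univ \ {q}).card = Fintype.card Q - 1 := by
  rw [card_sdiff_of_subset (subset_univ _), card_univ, card_singleton]

lemma exists_eq_univ_sdiff_singleton_of_card {S : Finset Q} (hQ : 0 < Fintype.card Q)
    (hS : S.card = Fintype.card Q - 1) : ∃ q, S = univ \ {q} := by
  obtain ⟨q, hq⟩ := card_eq_one.mp (show Sᶜ.card = 1 by rw [card_compl]; omega)
  exact ⟨q, by rw [← compl_eq_univ_sdiff, ← hq, compl_compl]⟩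

lemma eq_univ_sdiff_singleton_of_subset {s : Finset Q} {q : Q} (h : univ \ {q} ⊆ s)
    (hq : q ∉ s) : s = univ \ {q} :=
  (subset_sdiff.mpr ⟨subset_univ s, disjoint_singleton_right.mpr hq⟩).antisymm h

variable (δ : Q → A → Q)

lemma exists_word_of_mem_permGroup {g : Equiv.Perm Q} (hg : g ∈ permGroup δ) :
    ∃ w : List A, ∀ q, dw δ q w = g q := by
  rw [permGroup, ← Subgroup.mem_toSubmonoid, Subgroup.closure_toSubmonoid_of_finite] at hg
  induction hg using Submonoid.closure_induction with
  | mem π hπ =>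
    obtain ⟨a, ha⟩ := hπ
    exact ⟨[a], fun q => (ha q).symm⟩
  | one => exact ⟨[], fun _ => rfl⟩
  | mul g h _ _ hg hh =>
    obtain ⟨u, hu⟩ := hg
    obtain ⟨v, hv⟩ := hh
    exact ⟨v ++ u, fun q => by rw [dw_append, hv, hu]; rfl⟩

theorem exists_letter_of_image_eq_univ_sdiff_singleton (w : List A) (q : Q)
    (hw : univ.image (fun p => dw δ p w) = univ \ {q}) :
    ∃ (a : A) (s : Q), univ.image (δ · a) = univ \ {s} ∧ ∃ g ∈ permGroup δ, g s = q := by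
  induction w using List.reverseRecOn generalizing q with
  | nil => simp [dw, Finset.ext_iff] at hw
  | append_singleton w b ih =>
    rw [image_dw_append_singleton] at hw
    by_cases hb : Function.Surjective (δ · b)
    · set π := Equiv.ofBijective _ hb.bijective_of_finite
      have hπ : π ∈ permGroup δ := Subgroup.subset_closure ⟨b, fun _ => rfl⟩
      have hw' : univ.image (fun p => dw δ p w) = univ \ {π⁻¹ q} := by
        apply image_injective π.injective
        rwa [image_univ_sdiff_singleton_perm, ← Equiv.Perm.mul_apply, mul_inv_cancel,
          Equiv.Perm.one_apply]
      obtain ⟨a, s, ha, g, hg, hgs⟩ := ih (π⁻¹ q) hw'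
      exact ⟨a, s, ha, π * g, mul_mem hπ hg, by simp [hgs]⟩
    · have hsub : univ \ {q} ⊆ univ.image (δ · b) := hw ▸ image_subset_image (subset_univ _)
      refine ⟨b, q, eq_univ_sdiff_singleton_of_subset hsub fun hq => hb fun p => ?_,
        1, one_mem _, rfl⟩
      obtain rfl | hp := eq_or_ne p q
      · simpa using hq
      · simpa using hsub (by simpa using hp)

lemma reach_univ_sdiff_singleton {a : A} {s : Q} (ha : univ.image (δ · a) = univ \ {s})
    {g : Equiv.Perm Q} (hg : g ∈ permGroup δ) : reach δ (univ \ {g s}) := by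
  obtain ⟨w, hw⟩ := exists_word_of_mem_permGroup δ hg
  refine ⟨a :: w, ?_⟩
  calc univ.image (fun p => dw δ p (a :: w))
      = (univ.image (δ · a)).image g := by rw [image_image]; exact image_congr fun p _ => hw _
    _ = univ \ {g s} := by rw [ha, image_univ_sdiff_singleton_perm]

end

theorem reachable_iff_orbits_general [Fintype Q] [DecidableEq Q]
    (δ : Q → A → Q) (n m : ℕ)
    (hn : Fintype.card Q = n)
    (hnm : m < n) :
    (∀ S : Finset Q, S.card = n - 1 → reach δ S) ↔
      ((∃ a : A, rkl δ a = n - 1) ∧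
        ∀ q : Q, ∃ (a : A) (s : Q), rkl δ a = n - 1 ∧
          Finset.univ.image (fun p => δ p a) = Finset.univ \ {s} ∧
          ∃ g ∈ permGroup δ, g s = q) := by
  subst hn
  have hrank {a : A} {s : Q} (ha : univ.image (δ · a) = univ \ {s}) :
      rkl δ a = Fintype.card Q - 1 := by
    rw [rkl, ha, card_univ_sdiff_singleton]
  constructor
  · intro hreach
    have horbits (q : Q) : ∃ (a : A) (s : Q), rkl δ a = Fintype.card Q - 1 ∧
        univ.image (δ · a) = univ \ {s} ∧ ∃ g ∈ permGroup δ, g s = q := by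
      obtain ⟨w, hw⟩ := hreach (univ \ {q}) (card_univ_sdiff_singleton q)
      obtain ⟨a, s, ha, hg⟩ := exists_letter_of_image_eq_univ_sdiff_singleton δ w q hw
      exact ⟨a, s, hrank ha, ha, hg⟩
    have : Nonempty Q := Fintype.card_pos_iff.mp (by omega)
    obtain ⟨a, -, ha, -⟩ := horbits (Classical.arbitrary Q)
    exact ⟨⟨a, ha⟩, horbits⟩
  · rintro ⟨-, horbits⟩ S hS
    obtain ⟨q, rfl⟩ := exists_eq_univ_sdiff_singleton_of_card (by omega) hS
    obtain ⟨a, s, -, ha, g, hg, rfl⟩ := horbits q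
    exact reach_univ_sdiff_singleton δ ha hg

theorem reachable_iff_orbits [Fintype Q] [DecidableEq Q] [Fintype A]
    (δ : Q → A → Q) (n m : ℕ)
    (hn : Fintype.card Q = n)
    (hm : (Finset.univ.filter (fun a : A => rkl δ a = n - 1)).card = m)
    (hnm : m < n) :
    (∀ S : Finset Q, S.card = n - 1 → reach δ S) ↔
      ((∃ a : A, rkl δ a = n - 1) ∧
        ∀ q : Q, ∃ (a : A) (s : Q), rkl δ a = n - 1 ∧
          Finset.univ.image (fun p => δ p a) = Finset.univ \ {s} ∧
          ∃ g ∈ permGroup δ, g s = q) :=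
  reachable_iff_orbits_general δ n m hn hnm
end

section
/- If A = (Σ, Q, δ) is a completely reachable semi-automaton with |Q| > 2 in which exactly one letter is non-permutational (all other letters induce permutations of Q), then the permutation group generated by the permutational letters acts transitively on Q. -/
open Finset

universe u v

variable {Q : Type u} {A : Type v}

/-! Let `b` be the non-permutational letter. As all other letters permute `Q`, the image of
a word is either `Q` or contained in `g(δ(Q, b))` for some `g ∈ permGroup δ`: after the last
occurrence of `b` only permutations are applied. Since `|δ(Q, b)| < |Q|`, each reachable set
`Q ∖ {x}` equals such a `g(δ(Q, b))`. Comparing these representations of `Q ∖ {p}` and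
`Q ∖ {q}` gives an element of `permGroup δ` mapping `Q ∖ {p}` onto `Q ∖ {q}`, hence `p` to `q`. -/

lemma dw_append_singleton (δ : Q → A → Q) (q : Q) (w : List A) (a : A) :
    dw δ q (w ++ [a]) = δ (dw δ q w) a := by
  simp [dw]

section

variable [Fintype Q] [DecidableEq Q] {δ : Q → A → Q}

lemma ofBijective_mem_permGroup {a : A} (ha : Function.Bijective (fun q => δ q a)) :
    Equiv.ofBijective _ ha ∈ permGroup δ :=
  Subgroup.subset_closure ⟨a, fun _ => rfl⟩

lemma card_image_lt_card_of_not_bijective {f : Q → Q} (hf : ¬ Function.Bijective f) :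
    (univ.image f).card < Fintype.card Q := by
  rw [← Finite.injective_iff_bijective] at hf
  refine lt_of_le_of_ne (card_image_le.trans_eq card_univ) fun h => hf ?_
  rw [← card_univ, card_image_iff, coe_univ] at h
  exact Set.injOn_univ.mp h

lemma image_dw_eq_univ_or_subset_perm_image {b : A}
    (hu : ∀ a : A, ¬ Function.Bijective (fun q => δ q a) → a = b) (w : List A) :
    univ.image (fun q => dw δ q w) = univ ∨
      ∃ g ∈ permGroup δ, univ.image (fun q => dw δ q w) ⊆ (univ.image (fun q => δ q b)).image g := by
  induction w using List.reverseRecOn with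
  | nil => left; simp [dw]
  | append_singleton w a ih =>
    have himage : univ.image (fun q => dw δ q (w ++ [a])) =
        (univ.image (fun q => dw δ q w)).image (fun q => δ q a) := by
      simp only [image_image, Function.comp_def, dw_append_singleton]
    rw [himage]
    by_cases ha : Function.Bijective (fun q => δ q a)
    · set σ := Equiv.ofBijective _ ha
      rcases ih with hw | ⟨g, hg, hw⟩
      · left
        rw [hw]
        exact image_univ_equiv σ
      · right
        refine ⟨σ * g, mul_mem (ofBijective_mem_permGroup ha) hg, ?_⟩
        rw [Equiv.Perm.coe_mul, ← image_image]
        exact image_subset_image hw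
    · obtain rfl := hu a ha
      exact Or.inr ⟨1, one_mem _, by simpa using image_subset_image (subset_univ _)⟩

lemma exists_perm_image_eq_erase (hcr : complReach δ) {b : A}
    (hb : ¬ Function.Bijective (fun q => δ q b))
    (hu : ∀ a : A, ¬ Function.Bijective (fun q => δ q a) → a = b)
    {x : Q} (hx : (univ.erase x).Nonempty) :
    ∃ g ∈ permGroup δ, (univ.image (fun q => δ q b)).image g = univ.erase x := by
  obtain ⟨w, hw⟩ := hcr _ hx
  rcases image_dw_eq_univ_or_subset_perm_image hu w with huniv | ⟨g, hg, hsub⟩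
  · exact absurd (mem_univ x) (erase_eq_self.mp (hw.symm.trans huniv))
  refine ⟨g, hg, (eq_of_subset_of_card_le (hw ▸ hsub) ?_).symm⟩
  rw [card_image_of_injective _ g.injective, card_erase_of_mem (mem_univ x), card_univ]
  have := card_image_lt_card_of_not_bijective hb
  omega

lemma Equiv.Perm.apply_eq_of_image_erase_eq {σ : Equiv.Perm Q} {p q : Q}
    (h : (univ.erase p).image σ = univ.erase q) : σ p = q := by
  rwa [image_erase σ.injective, image_univ_equiv, erase_inj _ (mem_univ _)] at h

end

theorem transitive_of_complReach_one_nonperm_general [Fintype Q] [DecidableEq Q]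
    (δ : Q → A → Q)
    (hcr : complReach δ)
    (hone : ∃! a : A, ¬ Function.Bijective (fun q => δ q a)) :
    ∀ p q : Q, ∃ g ∈ permGroup δ, g p = q := by
  intro p q
  obtain rfl | hpq := eq_or_ne p q
  · exact ⟨1, one_mem _, rfl⟩
  obtain ⟨b, hb, hu⟩ := hone
  obtain ⟨g, hg, hgp⟩ := exists_perm_image_eq_erase hcr hb hu (x := p) ⟨q, by simp [hpq.symm]⟩
  obtain ⟨h, hh, hhq⟩ := exists_perm_image_eq_erase hcr hb hu (x := q) ⟨p, by simp [hpq]⟩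
  refine ⟨h * g⁻¹, mul_mem hh (inv_mem hg), Equiv.Perm.apply_eq_of_image_erase_eq ?_⟩
  rw [← hgp, ← hhq, image_image]
  congr 1
  ext
  simp

theorem transitive_of_complReach_one_nonperm [Fintype Q] [DecidableEq Q]
    (δ : Q → A → Q)
    (hQ : 2 < Fintype.card Q)
    (hcr : complReach δ)
    (hone : ∃! a : A, ¬ Function.Bijective (fun q => δ q a)) :
    ∀ p q : Q, ∃ g ∈ permGroup δ, g p = q :=
  transitive_of_complReach_one_nonperm_general δ hcr hone
end

section
/- Every completely reachable semi-automaton over a binary alphabet with more than 2 states is circular, i.e., one of its two letters induces a cyclic permutation of the states with a single orbit, and the other letter has rank n-1. -/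
open Finset

universe u v

variable {Q : Type u} {A : Type v}

section CRAux

open Function

variable [Fintype Q] [DecidableEq Q]

private lemma img_concat (δ : Q → A → Q) (w : List A) (x : A) :
    Finset.univ.image (fun q => dw δ q (w ++ [x]))
      = (Finset.univ.image (fun q => dw δ q w)).image (fun q => δ q x) := by
  rw [Finset.image_image]
  refine Finset.image_congr fun q _ => ?_
  simp [dw, List.foldl_append]

private lemma img_nil (δ : Q → A → Q) :
    Finset.univ.image (fun q => dw δ q ([] : List A)) = Finset.univ := by
  simp [dw]

private lemma card_img_lt (f : Q → Q) (hf : ¬ Function.Surjective f) :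
    (Finset.univ.image f).card < Fintype.card Q := by
  rw [← Finset.card_univ]
  refine Finset.card_lt_card ?_
  rw [Finset.ssubset_univ_iff]
  intro h
  refine hf fun q => ?_
  have : q ∈ Finset.univ.image f := by rw [h]; exact Finset.mem_univ q
  simpa using this

private lemma erase_card_eq (q : Q) :
    (Finset.univ.erase q).card = Fintype.card Q - 1 := by simp

private lemma erase_nonempty (q : Q) (hQ : 2 < Fintype.card Q) :
    (Finset.univ.erase q).Nonempty := by
  rw [← Finset.card_pos, erase_card_eq]; omega

private lemma erase_inj (p q : Q)
    (h : Finset.univ.erase p = Finset.univ.erase q) : p = q := by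
  by_contra hne
  have hp : p ∈ Finset.univ.erase q := by simp [hne]
  rw [← h] at hp
  simp at hp

private lemma not_surj_of_not_bij (f : Q → Q) (hf : ¬ Function.Bijective f) :
    ¬ Function.Surjective f :=
  fun hs => hf ((Finite.surjective_iff_bijective).mp hs)

private lemma caseA (δ : Q → Bool → Q) (hQ : 2 < Fintype.card Q)
    (hcr : complReach δ)
    (h1 : Function.Bijective (fun q => δ q true))
    (h2 : Function.Bijective (fun q => δ q false)) : False := by
  have key : ∀ w : List Bool,
      Finset.univ.image (fun q => dw δ q w) = Finset.univ := by
    intro w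
    induction w using List.reverseRecOn with
    | nil => exact img_nil δ
    | append_singleton w x ih =>
      rw [img_concat, ih]
      cases x
      · exact Finset.image_univ_of_surjective h2.2
      · exact Finset.image_univ_of_surjective h1.2
  have : Nonempty Q := Fintype.card_pos_iff.mp (by omega)
  obtain ⟨q⟩ := this
  obtain ⟨w, hw⟩ := hcr {q} (Finset.singleton_nonempty q)
  rw [key w] at hw
  have := congrArg Finset.card hw
  rw [Finset.card_univ, Finset.card_singleton] at this
  omega

private lemma caseB (δ : Q → Bool → Q) (hQ : 2 < Fintype.card Q)
    (hcr : complReach δ)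
    (h1 : ¬ Function.Bijective (fun q => δ q true))
    (h2 : ¬ Function.Bijective (fun q => δ q false)) : False := by
  have hcard : ∀ x : Bool,
      (Finset.univ.image (fun q => δ q x)).card < Fintype.card Q := by
    intro x
    cases x
    · exact card_img_lt _ (not_surj_of_not_bij _ h2)
    · exact card_img_lt _ (not_surj_of_not_bij _ h1)
  have key : ∀ q : Q, ∃ x : Bool,
      Finset.univ.erase q = Finset.univ.image (fun p => δ p x) := by
    intro q
    obtain ⟨w, hw⟩ := hcr (Finset.univ.erase q) (erase_nonempty q hQ)
    induction w using List.reverseRecOn with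
    | nil =>
      exfalso
      rw [img_nil] at hw
      have := congrArg Finset.card hw
      rw [Finset.card_univ, erase_card_eq] at this
      omega
    | append_singleton w x _ =>
      refine ⟨x, Finset.eq_of_subset_of_card_le ?_ ?_⟩
      · rw [← hw, img_concat]
        exact Finset.image_subset_image (Finset.subset_univ _)
      · rw [erase_card_eq]
        have := hcard x
        omega
  choose f hf using key
  have hinj : Function.Injective f := by
    intro p q hpq
    refine erase_inj p q ?_
    rw [hf p, hf q, hpq]
  have := Fintype.card_le_of_injective f hinj
  simp at this
  omega

private lemma caseC (δ : Q → Bool → Q) (hQ : 2 < Fintype.card Q)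
    (hcr : complReach δ) (c : Bool)
    (hc : Function.Bijective (fun q => δ q c))
    (hd : ¬ Function.Bijective (fun q => δ q (!c))) :
    isCyclicPerm (fun q => δ q c) ∧ rkl δ (!c) = Fintype.card Q - 1 := by
  set n := Fintype.card Q with hn
  set fc : Q → Q := fun q => δ q c with hfc
  set fd : Q → Q := fun q => δ q (!c) with hfd
  have hds : ¬ Function.Surjective fd := not_surj_of_not_bij _ hd
  have hcard_d : (Finset.univ.image fd).card < n := card_img_lt _ hds
  have hletter : ∀ x : Bool, x = c ∨ x = !c := by
    intro x; cases c <;> cases x <;> simp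
  -- rank of fd is exactly n - 1
  have hrk : (Finset.univ.image fd).card = n - 1 := by
    by_contra hne
    have hle : (Finset.univ.image fd).card ≤ n - 2 := by omega
    have key : ∀ w : List Bool,
        Finset.univ.image (fun q => dw δ q w) = Finset.univ ∨
        (Finset.univ.image (fun q => dw δ q w)).card ≤ n - 2 := by
      intro w
      induction w using List.reverseRecOn with
      | nil => exact Or.inl (img_nil δ)
      | append_singleton w x ih =>
        rw [img_concat]
        rcases hletter x with rfl | rfl
        · rcases ih with h | h
          · left; rw [h]; exact Finset.image_univ_of_surjective hc.2
          · right; exact le_trans Finset.card_image_le h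
        · right
          refine le_trans (Finset.card_le_card ?_) hle
          exact Finset.image_subset_image (Finset.subset_univ _)
    have : Nonempty Q := Fintype.card_pos_iff.mp (by omega)
    obtain ⟨q⟩ := this
    obtain ⟨w, hw⟩ := hcr (Finset.univ.erase q) (erase_nonempty q hQ)
    rcases key w with h | h
    · rw [hw] at h
      have := congrArg Finset.card h
      rw [Finset.card_univ, erase_card_eq] at this
      omega
    · rw [hw, erase_card_eq] at h
      omega
  -- the missing state q₀
  have hne_univ : Finset.univ.image fd ≠ Finset.univ := by
    intro h
    rw [h, Finset.card_univ] at hcard_d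
    omega
  obtain ⟨q₀, hq₀⟩ : ∃ q, q ∉ Finset.univ.image fd := by
    by_contra h
    push_neg at h
    exact hne_univ (Finset.eq_univ_iff_forall.mpr h)
  have hImd : Finset.univ.image fd = Finset.univ.erase q₀ := by
    refine Finset.eq_of_subset_of_card_le ?_ ?_
    · intro x hx
      exact Finset.mem_erase.mpr ⟨fun he => hq₀ (he ▸ hx), Finset.mem_univ x⟩
    · rw [hrk, erase_card_eq]
  -- reachable sets are univ or inside erase (fc^[k] q₀)
  have key2 : ∀ w : List Bool,
      Finset.univ.image (fun q => dw δ q w) = Finset.univ ∨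
      ∃ k : ℕ, Finset.univ.image (fun q => dw δ q w)
          ⊆ Finset.univ.erase (fc^[k] q₀) := by
    intro w
    induction w using List.reverseRecOn with
    | nil => exact Or.inl (img_nil δ)
    | append_singleton w x ih =>
      rw [img_concat]
      rcases hletter x with rfl | rfl
      · rcases ih with h | ⟨k, hsub⟩
        · left; rw [h]; exact Finset.image_univ_of_surjective hc.2
        · right
          refine ⟨k + 1, ?_⟩
          calc (Finset.univ.image (fun q => dw δ q w)).image fc
              ⊆ (Finset.univ.erase (fc^[k] q₀)).image fc :=
                Finset.image_subset_image hsub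
            _ = (Finset.univ.image fc).erase (fc (fc^[k] q₀)) :=
                Finset.image_erase hc.1 _ _
            _ = Finset.univ.erase (fc^[k + 1] q₀) := by
                rw [Finset.image_univ_of_surjective hc.2,
                  Function.iterate_succ_apply']
      · right
        refine ⟨0, ?_⟩
        rw [Function.iterate_zero_apply, ← hImd]
        exact Finset.image_subset_image (Finset.subset_univ _)
  -- orbit of q₀ covers everything
  have horb : ∀ q : Q, ∃ k : ℕ, fc^[k] q₀ = q := by
    intro q
    obtain ⟨w, hw⟩ := hcr (Finset.univ.erase q) (erase_nonempty q hQ)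
    rcases key2 w with h | ⟨k, hsub⟩
    · exfalso
      rw [hw] at h
      have := congrArg Finset.card h
      rw [Finset.card_univ, erase_card_eq] at this
      omega
    · rw [hw] at hsub
      have heq : Finset.univ.erase q = Finset.univ.erase (fc^[k] q₀) := by
        refine Finset.eq_of_subset_of_card_le hsub ?_
        rw [erase_card_eq, erase_card_eq]
      exact ⟨k, (erase_inj _ _ heq).symm⟩
  -- fc is a cyclic permutation
  let e : Equiv.Perm Q := Equiv.ofBijective fc hc
  have hepow : ∀ (k : ℕ) (x : Q), (e ^ k) x = fc^[k] x := by
    intro k x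
    induction k with
    | zero => simp
    | succ k ih =>
      rw [pow_succ', Equiv.Perm.mul_apply, ih, Function.iterate_succ_apply']
      rfl
  have hm : 0 < orderOf e := orderOf_pos e
  have hid : ∀ x : Q, fc^[orderOf e] x = x := by
    intro x
    rw [← hepow, pow_orderOf_eq_one]
    rfl
  obtain ⟨m0, hm0⟩ : ∃ m0, orderOf e = m0 + 1 := ⟨orderOf e - 1, by omega⟩
  have hfix : ∀ (t : ℕ) (x : Q), fc^[(orderOf e) * t] x = x := by
    intro t x
    rw [Function.iterate_mul]
    have : fc^[orderOf e] = id := funext hid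
    rw [this]
    simp
  have hcyc : isCyclicPerm fc := by
    refine ⟨hc, fun p q => ?_⟩
    obtain ⟨i, hi⟩ := horb p
    obtain ⟨j, hj⟩ := horb q
    refine ⟨j + i * m0, ?_⟩
    rw [← hi, ← Function.iterate_add_apply]
    have harith : j + i * m0 + i = j + (orderOf e) * i := by
      rw [hm0]; ring
    rw [harith, Function.iterate_add_apply, hfix, hj]
  exact ⟨hcyc, hrk⟩

end CRAux

theorem binary_complReach_circular [Fintype Q] [DecidableEq Q]
    (δ : Q → Bool → Q) (hQ : 2 < Fintype.card Q)
    (hcr : complReach δ) :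
    ∃ c : Bool, isCyclicPerm (fun q => δ q c) ∧
      rkl δ (!c) = Fintype.card Q - 1 := by
  by_cases h1 : Function.Bijective (fun q => δ q true) <;>
    by_cases h2 : Function.Bijective (fun q => δ q false)
  · exact (caseA δ hQ hcr h1 h2).elim
  · exact ⟨true, caseC δ hQ hcr true h1 (by simpa using h2)⟩
  · exact ⟨false, caseC δ hQ hcr false h2 (by simpa using h1)⟩
  · exact (caseB δ hQ hcr h1 h2).elim
end

section
/- Let A = (Σ, Q, δ) be a circular semi-automaton with n states, b inducing an n-cycle, and a a letter of rank n-1. Suppose there exist q ∈ Q and d > 0 coprime to n such that for each 0 < m < n, either δ(q, b^m a) = δ(q, a b^{n+m-d}), or (only if d does not divide m) there is 0 ≤ r < n divisible by d with δ(q, a b^r) = δ(q, b^m a) or δ(q, b^m a b^r) = δ(q, a). Then all 2-element subsets of Q are distinguishable in the power automaton of A. -/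
open Finset

universe u v

variable {Q : Type u} {A : Type v}

set_option linter.unusedSectionVars false
set_option linter.unusedVariables false
set_option maxHeartbeats 1000000

private def evo {n : ℕ} (F : ZMod n → ZMod n) : List ℕ → ZMod n → ZMod n
  | [], x => x
  | t :: L, x => evo F L (F (x + (t : ZMod n)))

private def CGoal {n : ℕ} (F : ZMod n → ZMod n) (x₁ x₂ y₁ y₂ : ZMod n) : Prop :=
  ∃ (L : List ℕ) (t : ℕ),
    Xor' (F (evo F L x₁ + (t:ZMod n)) = F (evo F L x₂ + (t:ZMod n)))
         (F (evo F L y₁ + (t:ZMod n)) = F (evo F L y₂ + (t:ZMod n)))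


section KRaw

variable {n : ℕ} (d : ℕ) (hcop : Nat.Coprime d n)

private def kfun (δ : ZMod n) : ℕ :=
  (δ * ((ZMod.unitOfCoprime d hcop)⁻¹ : (ZMod n)ˣ)).val

private def rawm (δ : ZMod n) : ℕ :=
  if δ = (d : ZMod n) then 0 else if d ∣ δ.val then δ.val / d else n + kfun d hcop δ

private def pmd (δ : ZMod n) : ℕ := min (rawm d hcop δ) (rawm d hcop (-δ))

variable [NeZero n]

private lemma dc_one : ((d : ℕ) : ZMod n) * ((ZMod.unitOfCoprime d hcop)⁻¹ : (ZMod n)ˣ) = 1 := by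
  rw [← ZMod.coe_unitOfCoprime d hcop, ← Units.val_mul, mul_inv_cancel, Units.val_one]

private lemma cancel_c {z w : ZMod n}
    (h : z * ((ZMod.unitOfCoprime d hcop)⁻¹ : (ZMod n)ˣ) =
         w * ((ZMod.unitOfCoprime d hcop)⁻¹ : (ZMod n)ˣ)) : z = w := by
  have h2 := congrArg (fun x => x * ((ZMod.unitOfCoprime d hcop : (ZMod n)ˣ) : ZMod n)) h
  simp only [mul_assoc, ← Units.val_mul, inv_mul_cancel, Units.val_one, mul_one] at h2
  exact h2

private lemma kfun_eq_zero_iff (δ : ZMod n) : kfun d hcop δ = 0 ↔ δ = 0 := by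
  unfold kfun
  rw [ZMod.val_eq_zero]
  constructor
  · intro h
    exact cancel_c d hcop (by rw [h, zero_mul])
  · intro h; simp [h]

private lemma val_one' (h1 : 1 < n) : (1 : ZMod n).val = 1 := by
  have : ((1:ℕ) : ZMod n) = (1 : ZMod n) := by push_cast; ring
  rw [← this, ZMod.val_cast_of_lt h1]

private lemma kfun_d (h1 : 1 < n) : kfun d hcop ((d : ℕ) : ZMod n) = 1 := by
  unfold kfun
  rw [dc_one, val_one' h1]

private lemma kfun_eq_one (h1 : 1 < n) (δ : ZMod n) (h : kfun d hcop δ = 1) :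
    δ = (d : ZMod n) := by
  unfold kfun at h
  rw [← val_one' (n := n) h1] at h
  have h2 := ZMod.val_injective n h
  rw [← dc_one d hcop] at h2
  exact cancel_c d hcop h2

private lemma val_sub_one {z : ZMod n} (hz : z ≠ 0) : (z - 1).val = z.val - 1 := by
  have hv : 1 ≤ z.val := by
    rcases Nat.eq_zero_or_pos z.val with h | h
    · exact absurd ((ZMod.val_eq_zero z).mp h) hz
    · exact h
  have hlt : z.val - 1 < n := lt_of_le_of_lt (Nat.sub_le _ _) (ZMod.val_lt z)
  have : z - 1 = ((z.val - 1 : ℕ) : ZMod n) := by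
    have h3 := ZMod.natCast_rightInverse (n := n) z
    rw [Nat.cast_sub hv]
    push_cast
    rw [h3]
  rw [this, ZMod.val_cast_of_lt hlt]

private lemma kfun_sub (δ : ZMod n) (hδ : δ ≠ 0) :
    kfun d hcop (δ - (d : ZMod n)) = kfun d hcop δ - 1 := by
  unfold kfun
  have hne : δ * ((ZMod.unitOfCoprime d hcop)⁻¹ : (ZMod n)ˣ) ≠ 0 := by
    intro h
    exact hδ (cancel_c d hcop (by rw [h, zero_mul]))
  have he : (δ - (d : ZMod n)) * ((ZMod.unitOfCoprime d hcop)⁻¹ : (ZMod n)ˣ)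
      = δ * ((ZMod.unitOfCoprime d hcop)⁻¹ : (ZMod n)ˣ) - 1 := by
    rw [sub_mul, dc_one]
  rw [he, val_sub_one hne]

private lemma pmd_neg (δ : ZMod n) : pmd d hcop (-δ) = pmd d hcop δ := by
  unfold pmd; rw [neg_neg, min_comm]

private lemma rawm_eq_zero {δ : ZMod n} (h : rawm d hcop δ = 0) (hδ : δ ≠ 0) (hd : 0 < d) :
    δ = (d : ZMod n) := by
  unfold rawm at h
  split_ifs at h with h1 h2
  · exact h1
  · exfalso
    have hlt : δ.val < d := by
      rcases Nat.lt_or_ge δ.val d with h' | h'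
      · exact h'
      · exfalso
        have := Nat.div_pos h' hd
        omega
    have := Nat.eq_zero_of_dvd_of_lt h2 hlt
    · exact hδ ((ZMod.val_eq_zero δ).mp (by omega))
  · exfalso; have := Nat.pos_of_ne_zero (NeZero.ne n); omega


private lemma pmd_le : ∀ δ : ZMod n, pmd d hcop δ ≤ rawm d hcop δ := fun δ => min_le_left _ _

private lemma cast_val' : ∀ z : ZMod n, ((z.val : ℕ) : ZMod n) = z :=
  fun z => ZMod.natCast_rightInverse z

private lemma sub_d_cast {m : ZMod n} (hdm : d ∣ m.val) (hm0 : m ≠ 0) :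
    (m - (d : ZMod n)) = ((m.val - d : ℕ) : ZMod n) ∧ (m - (d : ZMod n)).val = m.val - d := by
  have hvpos : 0 < m.val := Nat.pos_of_ne_zero (fun h => hm0 ((ZMod.val_eq_zero m).mp h))
  have hdle : d ≤ m.val := Nat.le_of_dvd hvpos hdm
  have h1 : (m - (d : ZMod n)) = ((m.val - d : ℕ) : ZMod n) := by
    rw [Nat.cast_sub hdle, cast_val']
  refine ⟨h1, ?_⟩
  rw [h1, ZMod.val_cast_of_lt (lt_of_le_of_lt (Nat.sub_le _ _) (ZMod.val_lt m))]

private lemma bound_sub (h1 : 1 < n) (hd : 0 < d) (m : ZMod n) (hm0 : m ≠ 0)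
    (hmd : m ≠ (d : ZMod n)) :
    pmd d hcop (m - (d : ZMod n)) < rawm d hcop m := by
  have hn0 : 0 < n := by omega
  refine lt_of_le_of_lt (pmd_le d hcop _) ?_
  by_cases hdm : d ∣ m.val
  · -- phase 2
    obtain ⟨hc, hv⟩ := sub_d_cast d hdm hm0
    obtain ⟨j, hj⟩ := hdm
    have hvpos : 0 < m.val := Nat.pos_of_ne_zero (fun h => hm0 ((ZMod.val_eq_zero m).mp h))
    have hj1 : j ≠ 1 := by
      intro hj1; rw [hj1, mul_one] at hj
      exact hmd (by rw [← cast_val' (n := n) m, hj])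
    have hjpos : 0 < j := by
      rcases Nat.eq_zero_or_pos j with h | h
      · subst h; rw [mul_zero] at hj; omega
      · exact h
    have heq : m.val - d = d * (j - 1) := by
      cases j with
      | zero => omega
      | succ jj =>
        rw [hj, Nat.mul_succ, Nat.add_sub_cancel, Nat.succ_sub_one]
    have hraw_m : rawm d hcop m = j := by
      unfold rawm
      rw [if_neg hmd, if_pos ⟨j, hj⟩, hj, Nat.mul_div_cancel_left _ hd]
    rw [hraw_m]
    unfold rawm
    split_ifs with hA hB
    · omega
    · rw [hv, heq, Nat.mul_div_cancel_left _ hd]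
      omega
    · exfalso
      apply hB
      rw [hv, heq]
      exact ⟨j - 1, rfl⟩
  · -- phase 1
    have hk0 : kfun d hcop m ≠ 0 := fun h => hm0 ((kfun_eq_zero_iff d hcop m).mp h)
    have hk1 : kfun d hcop m ≠ 1 := fun h => hmd (kfun_eq_one d hcop h1 m h)
    have hraw_m : rawm d hcop m = n + kfun d hcop m := by
      unfold rawm; rw [if_neg hmd, if_neg hdm]
    rw [hraw_m]
    unfold rawm
    split_ifs with hA hB
    · omega
    · have := Nat.div_le_self (m - (d : ZMod n)).val d
      have := ZMod.val_lt (m - (d : ZMod n))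
      omega
    · rw [kfun_sub d hcop m hm0]
      omega

private lemma bound_jump (hd : 0 < d) (j : ℕ) (hjd : j * d < n) (κ : ℕ) :
    rawm d hcop ((j * d : ℕ) : ZMod n) < n + κ := by
  have hval : ((j * d : ℕ) : ZMod n).val = j * d := ZMod.val_cast_of_lt hjd
  have hn0 : 0 < n := by omega
  unfold rawm
  split_ifs with hA hB
  · omega
  · rw [hval, Nat.mul_div_cancel _ hd]
    have : j ≤ j * d := Nat.le_mul_of_pos_right j hd
    omega
  · exfalso; exact hB (by rw [hval]; exact ⟨j, mul_comm j d⟩)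

private lemma pmd_zero (hd : 0 < d) {δ : ZMod n} (hδ : δ ≠ 0) (h : pmd d hcop δ = 0) :
    δ = (d : ZMod n) ∨ δ = -((d : ℕ) : ZMod n) := by
  unfold pmd at h
  rcases Nat.min_eq_zero_iff.mp h with h' | h'
  · exact Or.inl (rawm_eq_zero d hcop h' hδ hd)
  · right
    have := rawm_eq_zero d hcop h' (by simpa using hδ) hd
    rw [← this]; ring


include hcop in
private lemma combinat (h1 : 1 < n) (hd : 0 < d)
    (F : ZMod n → ZMod n)
    (hFd : F ((d : ℕ) : ZMod n) = F 0)
    (hinj : ∀ x y : ZMod n, F x = F y →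
      x = y ∨ (x = 0 ∧ y = (d : ZMod n)) ∨ (x = (d : ZMod n) ∧ y = 0))
    (hst2 : ∀ m : ZMod n, m ≠ 0 → d ∣ m.val → F m = F 0 + m - (d : ZMod n))
    (hst : ∀ m : ZMod n, m ≠ 0 → m ≠ (d : ZMod n) → ¬ d ∣ m.val →
      F m = F 0 + m - (d : ZMod n) ∨
      ∃ j : ℕ, 1 ≤ j ∧ j * d < n ∧
        (F m = F 0 + ((j * d : ℕ) : ZMod n) ∨ F m = F 0 - ((j * d : ℕ) : ZMod n))) :
    ∀ x₁ x₂ y₁ y₂ : ZMod n, x₁ ≠ x₂ → y₁ ≠ y₂ →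
      ¬(x₁ = y₁ ∧ x₂ = y₂) → ¬(x₁ = y₂ ∧ x₂ = y₁) → CGoal F x₁ x₂ y₁ y₂ := by
  have hFne : ∀ m : ZMod n, m ≠ 0 → m ≠ (d : ZMod n) → F m ≠ F 0 := by
    intro m hm0 hmd h
    rcases hinj m 0 h with h' | ⟨h', _⟩ | ⟨h', _⟩
    · exact hm0 h'
    · exact hm0 h'
    · exact hmd h'
  have hFmeq : ∀ w m : ZMod n, m ≠ 0 → m ≠ (d : ZMod n) → F w = F m → w = m := by
    intro w m hm0 hmd h
    rcases hinj w m h with h' | ⟨h1', h2'⟩ | ⟨h1', h2'⟩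
    · exact h'
    · exact absurd h2' hmd
    · exact absurd h2' hm0
  have hF0eq : ∀ w : ZMod n, F w = F 0 → w = 0 ∨ w = (d : ZMod n) := by
    intro w h
    rcases hinj w 0 h with h' | ⟨h1', _⟩ | ⟨h1', _⟩
    · exact Or.inl h'
    · exact Or.inl h1'
    · exact Or.inr h1'
  have hrawd : rawm d hcop ((d : ℕ) : ZMod n) = 0 := by unfold rawm; rw [if_pos rfl]
  have Bone : ∀ m : ZMod n, m ≠ 0 → m ≠ (d : ZMod n) →
      pmd d hcop (F m - F 0) < rawm d hcop m := by
    intro m hm0 hmd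
    by_cases hdm : d ∣ m.val
    · have he := hst2 m hm0 hdm
      rw [show F m - F 0 = m - (d : ZMod n) by rw [he]; ring]
      exact bound_sub d hcop h1 hd m hm0 hmd
    · rcases hst m hm0 hmd hdm with hi | ⟨j, hj1, hjn, hcase⟩
      · rw [show F m - F 0 = m - (d : ZMod n) by rw [hi]; ring]
        exact bound_sub d hcop h1 hd m hm0 hmd
      · have hraw : rawm d hcop m = n + kfun d hcop m := by
          unfold rawm; rw [if_neg hmd, if_neg hdm]
        rw [hraw]
        rcases hcase with hc | hc
        · rw [show F m - F 0 = ((j * d : ℕ) : ZMod n) by rw [hc]; ring]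
          exact lt_of_le_of_lt (pmd_le d hcop _) (bound_jump d hcop hd j hjn _)
        · rw [show F m - F 0 = -((j * d : ℕ) : ZMod n) by rw [hc]; ring]
          rw [pmd_neg d hcop]
          exact lt_of_le_of_lt (pmd_le d hcop _) (bound_jump d hcop hd j hjn _)
  have xswap : ∀ x₁ x₂ y₁ y₂ : ZMod n, CGoal F x₂ x₁ y₁ y₂ → CGoal F x₁ x₂ y₁ y₂ := by
    rintro x₁ x₂ y₁ y₂ ⟨L, t, hx⟩
    refine ⟨L, t, ?_⟩
    rcases hx with ⟨h, hn⟩ | ⟨h, hn⟩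
    · exact Or.inl ⟨h.symm, hn⟩
    · exact Or.inr ⟨h, fun e => hn e.symm⟩
  have sideswap : ∀ x₁ x₂ y₁ y₂ : ZMod n, CGoal F y₁ y₂ x₁ x₂ → CGoal F x₁ x₂ y₁ y₂ := by
    rintro x₁ x₂ y₁ y₂ ⟨L, t, hx⟩
    exact ⟨L, t, hx.symm⟩
  have fin : ∀ x₁ x₂ y₁ y₂ : ZMod n, y₁ ≠ y₂ →
      ¬(x₁ = y₁ ∧ x₂ = y₂) → ¬(x₁ = y₂ ∧ x₂ = y₁) → x₂ - x₁ = (d : ZMod n) →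
      CGoal F x₁ x₂ y₁ y₂ := by
    intro x₁ x₂ y₁ y₂ hy hne1 hne2 hdiff
    refine ⟨[], (-x₁).val, ?_⟩
    have hcast : (((-x₁).val : ℕ) : ZMod n) = -x₁ := cast_val' _
    have e1 : x₁ + (((-x₁).val : ℕ) : ZMod n) = 0 := by rw [hcast]; ring
    have e2 : x₂ + (((-x₁).val : ℕ) : ZMod n) = (d : ZMod n) := by
      rw [hcast, ← hdiff]; ring
    show Xor' (F (x₁ + _) = F (x₂ + _)) (F (y₁ + _) = F (y₂ + _))
    refine Or.inl ⟨?_, ?_⟩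
    · rw [e1, e2, hFd]
    · intro hEq
      rcases hinj _ _ hEq with hh | ⟨ha, hb⟩ | ⟨ha, hb⟩
      · exact hy (add_right_cancel hh)
      · exact hne1 ⟨add_right_cancel (e1.trans ha.symm), add_right_cancel (e2.trans hb.symm)⟩
      · exact hne2 ⟨add_right_cancel (e1.trans hb.symm), add_right_cancel (e2.trans ha.symm)⟩
  have main : ∀ N : ℕ, ∀ x₁ x₂ y₁ y₂ : ZMod n, x₁ ≠ x₂ → y₁ ≠ y₂ →
      ¬(x₁ = y₁ ∧ x₂ = y₂) → ¬(x₁ = y₂ ∧ x₂ = y₁) →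
      min (pmd d hcop (x₂ - x₁)) (pmd d hcop (y₂ - y₁)) ≤ N → CGoal F x₁ x₂ y₁ y₂ := by
    intro N
    induction N using Nat.strong_induction_on with
    | _ N IH =>
    have finz : ∀ x₁ x₂ y₁ y₂ : ZMod n, x₁ ≠ x₂ → y₁ ≠ y₂ →
        ¬(x₁ = y₁ ∧ x₂ = y₂) → ¬(x₁ = y₂ ∧ x₂ = y₁) → pmd d hcop (x₂ - x₁) = 0 →
        CGoal F x₁ x₂ y₁ y₂ := by
      intro x₁ x₂ y₁ y₂ hx hy hne1 hne2 h0
      have hδ : x₂ - x₁ ≠ 0 := sub_ne_zero.mpr (Ne.symm hx)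
      rcases pmd_zero d hcop hd hδ h0 with h | h
      · exact fin x₁ x₂ y₁ y₂ hy hne1 hne2 h
      · refine xswap _ _ _ _ (fin x₂ x₁ y₁ y₂ hy ?_ ?_ ?_)
        · exact fun ⟨a2, b2⟩ => hne2 ⟨b2, a2⟩
        · exact fun ⟨a2, b2⟩ => hne1 ⟨b2, a2⟩
        · rw [← neg_sub, h, neg_neg]
    have move : ∀ x₁ x₂ y₁ y₂ m : ZMod n, ∀ t : ℕ,
        x₁ ≠ x₂ → y₁ ≠ y₂ → ¬(x₁ = y₁ ∧ x₂ = y₂) → ¬(x₁ = y₂ ∧ x₂ = y₁) →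
        x₁ + (t : ZMod n) = 0 → x₂ + (t : ZMod n) = m → m ≠ (d : ZMod n) →
        rawm d hcop m ≤ pmd d hcop (y₂ - y₁) → rawm d hcop m ≤ N →
        CGoal F x₁ x₂ y₁ y₂ := by
      intro x₁ x₂ y₁ y₂ m t hx hy hne1 hne2 ht1 ht2 hmd hley hleN
      have hm0 : m ≠ 0 := by
        intro h; rw [h] at ht2; exact hx (add_right_cancel (ht1.trans ht2.symm))
      have hB1 := Bone m hm0 hmd
      have hB2 := bound_sub d hcop h1 hd m hm0 hmd
      have hFm0 : F m ≠ F 0 := hFne m hm0 hmd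
      by_cases hyM : (y₁ + (t : ZMod n) = 0 ∧ y₂ + (t : ZMod n) = (d : ZMod n)) ∨
          (y₁ + (t : ZMod n) = (d : ZMod n) ∧ y₂ + (t : ZMod n) = 0)
      · refine ⟨[], t, Or.inr ⟨?_, ?_⟩⟩
        · show F (y₁ + _) = F (y₂ + _)
          rcases hyM with ⟨ha, hb⟩ | ⟨ha, hb⟩
          · rw [ha, hb, hFd]
          · rw [ha, hb, hFd]
        · show ¬ F (x₁ + _) = F (x₂ + _)
          rw [ht1, ht2]
          exact fun e => hFm0 e.symm
      · have hthreat : ¬((y₁ + (t : ZMod n) = (d : ZMod n) ∧ y₂ + (t : ZMod n) = m) ∨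
            (y₁ + (t : ZMod n) = m ∧ y₂ + (t : ZMod n) = (d : ZMod n))) := by
          rintro (⟨ha, hb⟩ | ⟨ha, hb⟩)
          · have hdy : y₂ - y₁ = m - (d : ZMod n) := by
              rw [show y₂ - y₁ = (y₂ + (t : ZMod n)) - (y₁ + (t : ZMod n)) by ring, ha, hb]
            rw [hdy] at hley
            omega
          · have hdy : y₂ - y₁ = (d : ZMod n) - m := by
              rw [show y₂ - y₁ = (y₂ + (t : ZMod n)) - (y₁ + (t : ZMod n)) by ring, ha, hb]
            rw [hdy, show ((d : ZMod n) - m) = -(m - (d : ZMod n)) by ring,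
              pmd_neg d hcop] at hley
            omega
        have hy' : F (y₁ + (t : ZMod n)) ≠ F (y₂ + (t : ZMod n)) := by
          intro hEq
          rcases hinj _ _ hEq with hh | ⟨ha, hb⟩ | ⟨ha, hb⟩
          · exact hy (add_right_cancel hh)
          · exact hyM (Or.inl ⟨ha, hb⟩)
          · exact hyM (Or.inr ⟨ha, hb⟩)
        have hx' : F (x₁ + (t : ZMod n)) ≠ F (x₂ + (t : ZMod n)) := by
          rw [ht1, ht2]; exact fun e => hFm0 e.symm
        have hp1 : ¬(F (x₁ + (t : ZMod n)) = F (y₁ + (t : ZMod n)) ∧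
            F (x₂ + (t : ZMod n)) = F (y₂ + (t : ZMod n))) := by
          rintro ⟨e1, e2⟩
          rw [ht1] at e1; rw [ht2] at e2
          have hy2 : y₂ + (t : ZMod n) = m := hFmeq _ m hm0 hmd e2.symm
          rcases hF0eq _ e1.symm with hy1 | hy1
          · exact hne1 ⟨add_right_cancel (ht1.trans hy1.symm),
              add_right_cancel (ht2.trans hy2.symm)⟩
          · exact hthreat (Or.inl ⟨hy1, hy2⟩)
        have hp2 : ¬(F (x₁ + (t : ZMod n)) = F (y₂ + (t : ZMod n)) ∧
            F (x₂ + (t : ZMod n)) = F (y₁ + (t : ZMod n))) := by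
          rintro ⟨e1, e2⟩
          rw [ht1] at e1; rw [ht2] at e2
          have hy1 : y₁ + (t : ZMod n) = m := hFmeq _ m hm0 hmd e2.symm
          rcases hF0eq _ e1.symm with hy2 | hy2
          · exact hne2 ⟨add_right_cancel (ht1.trans hy2.symm),
              add_right_cancel (ht2.trans hy1.symm)⟩
          · exact hthreat (Or.inr ⟨hy1, hy2⟩)
        have hxlt : pmd d hcop (F (x₂ + (t : ZMod n)) - F (x₁ + (t : ZMod n))) <
            rawm d hcop m := by
          rw [ht1, ht2]; exact hB1
        have hminlt : min (pmd d hcop (F (x₂ + (t : ZMod n)) - F (x₁ + (t : ZMod n))))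
            (pmd d hcop (F (y₂ + (t : ZMod n)) - F (y₁ + (t : ZMod n)))) < N := by
          have := min_le_left (pmd d hcop (F (x₂ + (t : ZMod n)) - F (x₁ + (t : ZMod n))))
            (pmd d hcop (F (y₂ + (t : ZMod n)) - F (y₁ + (t : ZMod n))))
          omega
        obtain ⟨L, t', hXor⟩ := IH _ hminlt (F (x₁ + (t : ZMod n))) (F (x₂ + (t : ZMod n)))
          (F (y₁ + (t : ZMod n))) (F (y₂ + (t : ZMod n))) hx' hy' hp1 hp2 le_rfl
        exact ⟨t :: L, t', hXor⟩
    have drive : ∀ x₁ x₂ y₁ y₂ : ZMod n, x₁ ≠ x₂ → y₁ ≠ y₂ →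
        ¬(x₁ = y₁ ∧ x₂ = y₂) → ¬(x₁ = y₂ ∧ x₂ = y₁) →
        pmd d hcop (x₂ - x₁) ≠ 0 →
        pmd d hcop (x₂ - x₁) ≤ pmd d hcop (y₂ - y₁) →
        pmd d hcop (x₂ - x₁) ≤ N → CGoal F x₁ x₂ y₁ y₂ := by
      intro x₁ x₂ y₁ y₂ hx hy hne1 hne2 h0 hle hN
      have hpmdef : pmd d hcop (x₂ - x₁) =
          min (rawm d hcop (x₂ - x₁)) (rawm d hcop (x₁ - x₂)) := by
        unfold pmd; rw [neg_sub]
      rcases le_total (rawm d hcop (x₂ - x₁)) (rawm d hcop (x₁ - x₂)) with hor | hor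
      · have hpm : pmd d hcop (x₂ - x₁) = rawm d hcop (x₂ - x₁) := by
          rw [hpmdef, min_eq_left hor]
        have hmd : (x₂ - x₁) ≠ (d : ZMod n) := by
          intro h; apply h0; rw [h]
          have h4 := pmd_le d hcop ((d : ℕ) : ZMod n)
          rw [hrawd] at h4; omega
        refine move x₁ x₂ y₁ y₂ (x₂ - x₁) (-x₁).val hx hy hne1 hne2 ?_ ?_ hmd ?_ ?_
        · rw [cast_val']; ring
        · rw [cast_val']; ring
        · rw [← hpm]; exact hle
        · rw [← hpm]; exact hN
      · have hpm : pmd d hcop (x₂ - x₁) = rawm d hcop (x₁ - x₂) := by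
          rw [hpmdef, min_eq_right hor]
        have hmd : (x₁ - x₂) ≠ (d : ZMod n) := by
          intro h; apply h0
          have h3 : pmd d hcop (x₂ - x₁) = pmd d hcop (x₁ - x₂) := by
            rw [show x₂ - x₁ = -(x₁ - x₂) by ring, pmd_neg d hcop]
          rw [h3, h]
          have h4 := pmd_le d hcop ((d : ℕ) : ZMod n)
          rw [hrawd] at h4; omega
        refine xswap _ _ _ _ (move x₂ x₁ y₁ y₂ (x₁ - x₂) (-x₂).val hx.symm hy
          (fun ⟨a2, b2⟩ => hne2 ⟨b2, a2⟩) (fun ⟨a2, b2⟩ => hne1 ⟨b2, a2⟩) ?_ ?_ hmd ?_ ?_)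
        · rw [cast_val']; ring
        · rw [cast_val']; ring
        · rw [← hpm]; exact hle
        · rw [← hpm]; exact hN
    intro x₁ x₂ y₁ y₂ hx hy hne1 hne2 hmin
    by_cases h0x : pmd d hcop (x₂ - x₁) = 0
    · exact finz x₁ x₂ y₁ y₂ hx hy hne1 hne2 h0x
    by_cases h0y : pmd d hcop (y₂ - y₁) = 0
    · exact sideswap _ _ _ _ (finz y₁ y₂ x₁ x₂ hy hx
        (fun ⟨a2, b2⟩ => hne1 ⟨a2.symm, b2.symm⟩)
        (fun ⟨a2, b2⟩ => hne2 ⟨b2.symm, a2.symm⟩) h0y)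
    rcases le_total (pmd d hcop (x₂ - x₁)) (pmd d hcop (y₂ - y₁)) with hle | hle
    · exact drive x₁ x₂ y₁ y₂ hx hy hne1 hne2 h0x hle
        (by rw [min_eq_left hle] at hmin; exact hmin)
    · exact sideswap _ _ _ _ (drive y₁ y₂ x₁ x₂ hy hx
        (fun ⟨a2, b2⟩ => hne1 ⟨a2.symm, b2.symm⟩)
        (fun ⟨a2, b2⟩ => hne2 ⟨b2.symm, a2.symm⟩) h0y hle
        (by rw [min_eq_right hle] at hmin; exact hmin))
  intro x₁ x₂ y₁ y₂ hx hy hne1 hne2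
  exact main (min (pmd d hcop (x₂ - x₁)) (pmd d hcop (y₂ - y₁))) x₁ x₂ y₁ y₂
    hx hy hne1 hne2 le_rfl


end KRaw

private def wordOf (a b : A) : List ℕ → List A
  | [] => []
  | t :: L => List.replicate t b ++ a :: wordOf a b L


theorem two_sets_distinguishable_main [Fintype Q] [DecidableEq Q]
    (δ : Q → A → Q) (n : ℕ) (hn : Fintype.card Q = n)
    (a b : A)
    (hb : isCyclicPerm (fun q => δ q b))
    (ha : rkl δ a = n - 1)
    (q : Q) (d : ℕ) (hd : 0 < d) (hcop : Nat.Coprime d n)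
    (h : ∀ m : ℕ, 0 < m → m < n →
      dw δ q (List.replicate m b ++ [a]) =
          dw δ q (a :: List.replicate (n + m - d) b) ∨
      (¬ d ∣ m ∧ ∃ r : ℕ, r < n ∧ d ∣ r ∧
        (dw δ q (a :: List.replicate r b) = dw δ q (List.replicate m b ++ [a]) ∨
         dw δ q (List.replicate m b ++ [a] ++ List.replicate r b) = dw δ q [a]))) :
    ∀ S T : Finset Q, S.card = 2 → T.card = 2 → S ≠ T →
      distinguishable δ S T := by
  intro S T hS hT hST
  obtain ⟨s₁, s₂, hs12, rfl⟩ := Finset.card_eq_two.mp hS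
  obtain ⟨t₁, t₂, ht12, rfl⟩ := Finset.card_eq_two.mp hT
  -- n ≥ 3
  have hn3 : 3 ≤ n := by
    obtain ⟨w, hwT, hwS⟩ : ∃ w ∈ ({t₁, t₂} : Finset Q), w ∉ ({s₁, s₂} : Finset Q) := by
      by_contra hc; push_neg at hc
      exact hST ((Finset.eq_of_subset_of_card_le (fun z hz => hc z hz)
        (by rw [hS, hT])).symm)
    have h3 : (insert w ({s₁, s₂} : Finset Q)).card = 3 := by
      rw [Finset.card_insert_of_notMem hwS, hS]
    have h4 := Finset.card_le_univ (insert w ({s₁, s₂} : Finset Q))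
    rw [h3, hn] at h4
    exact h4
  haveI : NeZero n := ⟨by omega⟩
  have h1 : 1 < n := by omega
  -- the b-permutation
  let e : Q ≃ Q := Equiv.ofBijective (fun p => δ p b) hb.1
  have hsurjq : ∀ p : Q, ∃ k : ℕ, e^[k] q = p := fun p => hb.2 q p
  have hexp : ∃ k, 0 < k ∧ e^[k] q = q := by
    obtain ⟨i, j, hij, he⟩ := Finite.exists_ne_map_eq_of_infinite (fun k : ℕ => e^[k] q)
    rcases Nat.lt_or_ge i j with hlt | hge
    · refine ⟨j - i, by omega, ?_⟩
      have h2 : e^[i] ((e^[j - i]) q) = e^[i] q := by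
        rw [← Function.iterate_add_apply]
        have : i + (j - i) = j := by omega
        rw [this]; exact he.symm
      exact (e.injective.iterate i) h2
    · have hlt : j < i := by omega
      refine ⟨i - j, by omega, ?_⟩
      have h2 : e^[j] ((e^[i - j]) q) = e^[j] q := by
        rw [← Function.iterate_add_apply]
        have : j + (i - j) = i := by omega
        rw [this]; exact he
      exact (e.injective.iterate j) h2
  set p₀ := Nat.find hexp with hp₀def
  have hp₀spec := Nat.find_spec hexp
  have hp₀pos : 0 < p₀ := hp₀spec.1
  have hp₀fix : e^[p₀] q = q := hp₀spec.2
  have hminp : ∀ k, 0 < k → k < p₀ → e^[k] q ≠ q := by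
    intro k hk1 hk2 hk3
    exact (Nat.find_min hexp hk2) ⟨hk1, hk3⟩
  have hmul : ∀ c : ℕ, e^[p₀ * c] q = q := by
    intro c; induction c with
    | zero => simp
    | succ c ih =>
      have : p₀ * (c + 1) = p₀ * c + p₀ := by ring
      rw [this, Function.iterate_add_apply, hp₀fix, ih]
  have hmod : ∀ k : ℕ, e^[k] q = e^[k % p₀] q := by
    intro k
    conv_lhs => rw [← Nat.mod_add_div k p₀]
    rw [Function.iterate_add_apply, hmul]
  have hkey : ∀ i, i < p₀ → ∀ j, j < p₀ → e^[i] q = e^[j] q → i = j := by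
    have haux : ∀ i j, i < j → j < p₀ → e^[i] q = e^[j] q → False := by
      intro i j hij hj he
      apply hminp (j - i) (by omega) (by omega)
      have h2 : e^[i] ((e^[j - i]) q) = e^[i] q := by
        rw [← Function.iterate_add_apply]
        have : i + (j - i) = j := by omega
        rw [this]; exact he.symm
      exact (e.injective.iterate i) h2
    intro i hi j hj he
    rcases Nat.lt_trichotomy i j with hc | hc | hc
    · exact absurd (haux i j hc hj he) id
    · exact hc
    · exact absurd (haux j i hc hi he.symm) id
  have hple : p₀ ≤ n := by
    have hinjf : Function.Injective (fun i : Fin p₀ => e^[i.1] q) := by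
      intro i j hij
      exact Fin.ext (hkey i.1 i.2 j.1 j.2 hij)
    have := Fintype.card_le_of_injective _ hinjf
    rwa [Fintype.card_fin, hn] at this
  have hpge : n ≤ p₀ := by
    have hsurf : Function.Surjective (fun i : Fin p₀ => e^[i.1] q) := by
      intro p
      obtain ⟨k, hk⟩ := hsurjq p
      refine ⟨⟨k % p₀, Nat.mod_lt _ hp₀pos⟩, ?_⟩
      show e^[k % p₀] q = p
      rw [← hmod]; exact hk
    have := Fintype.card_le_of_surjective _ hsurf
    rwa [Fintype.card_fin, hn] at this
  have hpn : p₀ = n := le_antisymm hple hpge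
  have hmodn : ∀ k : ℕ, e^[k] q = e^[k % n] q := by
    intro k; rw [← hpn]; exact hmod k
  -- the coordinate map
  set ψ : ZMod n → Q := fun i => e^[i.val] q with hψdef
  have hψbij : Function.Bijective ψ := by
    constructor
    · intro i j hij
      apply ZMod.val_injective n
      exact hkey i.val (by rw [hpn]; exact ZMod.val_lt i) j.val
        (by rw [hpn]; exact ZMod.val_lt j) hij
    · intro p
      obtain ⟨k, hk⟩ := hsurjq p
      refine ⟨((k : ℕ) : ZMod n), ?_⟩
      show e^[((k : ℕ) : ZMod n).val] q = p
      rw [ZMod.val_natCast, ← hmodn]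
      exact hk
  have hψinj : Function.Injective ψ := hψbij.1
  set Ψ : ZMod n ≃ Q := Equiv.ofBijective ψ hψbij with hΨdef
  have hψsucc : ∀ i : ZMod n, δ (ψ i) b = ψ (i + 1) := by
    intro i
    show (fun p => δ p b) (e^[i.val] q) = e^[(i + 1).val] q
    have hval : (i + 1).val = (i.val + 1) % n := by
      rw [ZMod.val_add, val_one' h1]
    rw [hval, ← hmodn, Function.iterate_succ_apply']
    rfl
  -- dw lemmas
  have hdw_append : ∀ (p : Q) (u v : List A), dw δ p (u ++ v) = dw δ (dw δ p u) v := by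
    intro p u v; simp [dw, List.foldl_append]
  have hdw_cons : ∀ (p : Q) (w : List A), dw δ p (a :: w) = dw δ (δ p a) w :=
    fun p w => rfl
  have hdw_repl : ∀ (tt : ℕ) (i : ZMod n),
      dw δ (ψ i) (List.replicate tt b) = ψ (i + (tt : ℕ)) := by
    intro tt
    induction tt with
    | zero => intro i; show ψ i = ψ (i + ((0 : ℕ) : ZMod n)); rw [Nat.cast_zero, add_zero]
    | succ k ih =>
      intro i
      rw [List.replicate_succ]
      show dw δ (δ (ψ i) b) (List.replicate k b) = _
      rw [hψsucc, ih]
      congr 1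
      push_cast
      ring
  set F : ZMod n → ZMod n := fun i => Ψ.symm (δ (ψ i) a) with hFdef
  have hψF : ∀ i, δ (ψ i) a = ψ (F i) := by
    intro i
    show _ = Ψ (Ψ.symm (δ (ψ i) a))
    rw [Equiv.apply_symm_apply]
  have hdw_blk : ∀ (m : ℕ) (i : ZMod n),
      dw δ (ψ i) (List.replicate m b ++ [a]) = ψ (F (i + (m : ℕ))) := by
    intro m i
    rw [hdw_append, hdw_repl]
    exact hψF _
  have hψ0 : ψ 0 = q := by
    show e^[(0 : ZMod n).val] q = q
    rw [ZMod.val_zero]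
    rfl
  -- translations
  have htr1 : ∀ mv : ℕ,
      (dw δ q (List.replicate mv b ++ [a]) = dw δ q (a :: List.replicate (n + mv - d) b)) →
      F ((mv : ℕ) : ZMod n) = F 0 + ((n + mv - d : ℕ) : ZMod n) := by
    intro mv hE
    apply hψinj
    have l1 : dw δ q (List.replicate mv b ++ [a]) = ψ (F ((mv : ℕ) : ZMod n)) := by
      rw [← hψ0, hdw_blk, zero_add]
    have l2 : dw δ q (a :: List.replicate (n + mv - d) b) =
        ψ (F 0 + ((n + mv - d : ℕ) : ZMod n)) := by
      rw [← hψ0, hdw_cons, hψF, hdw_repl]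
    rw [l1, l2] at hE
    exact hE
  have htr2a : ∀ mv r : ℕ,
      (dw δ q (a :: List.replicate r b) = dw δ q (List.replicate mv b ++ [a])) →
      F 0 + ((r : ℕ) : ZMod n) = F ((mv : ℕ) : ZMod n) := by
    intro mv r hE
    apply hψinj
    have l1 : dw δ q (a :: List.replicate r b) = ψ (F 0 + ((r : ℕ) : ZMod n)) := by
      rw [← hψ0, hdw_cons, hψF, hdw_repl]
    have l2 : dw δ q (List.replicate mv b ++ [a]) = ψ (F ((mv : ℕ) : ZMod n)) := by
      rw [← hψ0, hdw_blk, zero_add]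
    rw [l1, l2] at hE
    exact hE
  have htr2b : ∀ mv r : ℕ,
      (dw δ q (List.replicate mv b ++ [a] ++ List.replicate r b) = dw δ q [a]) →
      F ((mv : ℕ) : ZMod n) + ((r : ℕ) : ZMod n) = F 0 := by
    intro mv r hE
    apply hψinj
    have l1 : dw δ q (List.replicate mv b ++ [a] ++ List.replicate r b) =
        ψ (F ((mv : ℕ) : ZMod n) + ((r : ℕ) : ZMod n)) := by
      rw [← hψ0, hdw_append, hdw_blk, hdw_repl, zero_add]
    have l2 : dw δ q [a] = ψ (F 0) := by
      rw [← hψ0, hdw_cons]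
      show δ (ψ 0) a = ψ (F 0)
      exact hψF 0
    rw [l1, l2] at hE
    exact hE
  -- basic facts about d in ZMod n
  have hdd0 : ((d : ℕ) : ZMod n) ≠ 0 := by
    intro hc
    have h2 := (ZMod.natCast_eq_zero_iff d n).mp hc
    have h3 := Nat.Coprime.eq_one_of_dvd hcop.symm h2
    omega
  have cast_val : ∀ z : ZMod n, ((z.val : ℕ) : ZMod n) = z := fun z =>
    ZMod.natCast_rightInverse z
  have hdnen : d ≠ n := by
    intro hdn
    subst hdn
    have := Nat.Coprime.eq_one_of_dvd hcop dvd_rfl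
    omega
  -- hFd
  have hFd : F ((d : ℕ) : ZMod n) = F 0 := by
    set mv := ((d : ℕ) : ZMod n).val with hmvdef
    have hmvpos : 0 < mv := Nat.pos_of_ne_zero (fun hz => hdd0 ((ZMod.val_eq_zero _).mp hz))
    have hmvlt : mv < n := ZMod.val_lt _
    have hcastmv : ((mv : ℕ) : ZMod n) = ((d : ℕ) : ZMod n) := cast_val _
    rcases h mv hmvpos hmvlt with hi | ⟨hnd, r, hrn, hrd, hc⟩
    · have he := htr1 mv hi
      rw [hcastmv] at he
      rcases le_or_gt d (n + mv) with hle | hlt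
      · have hcs : ((n + mv - d : ℕ) : ZMod n) = ((mv : ℕ) : ZMod n) - ((d : ℕ) : ZMod n) := by
          rw [Nat.cast_sub hle, Nat.cast_add, ZMod.natCast_self, zero_add]
        rw [hcs, hcastmv] at he
        rw [he]; ring
      · have hz : n + mv - d = 0 := by omega
        rw [hz, Nat.cast_zero, add_zero] at he
        exact he
    · have hr0 : r = 0 := by
        rcases Nat.lt_or_ge d n with hdn | hdn
        · exfalso
          apply hnd
          have : mv = d := by rw [hmvdef, ZMod.val_natCast, Nat.mod_eq_of_lt hdn]
          rw [this]
        · have hdgt : n < d := by omega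
          exact Nat.eq_zero_of_dvd_of_lt hrd (by omega)
      subst hr0
      rcases hc with hc | hc
      · have he := htr2a mv 0 hc
        rw [hcastmv, Nat.cast_zero, add_zero] at he
        exact he.symm
      · have he := htr2b mv 0 hc
        rw [hcastmv, Nat.cast_zero, add_zero] at he
        exact he
  -- injectivity structure of F
  have hcardF : (Finset.univ.image F).card = n - 1 := by
    have hcomp : Finset.univ.image F =
        ((Finset.univ.image ψ).image (fun p => δ p a)).image Ψ.symm := by
      rw [Finset.image_image, Finset.image_image]
      rfl
    rw [hcomp, Finset.image_univ_of_surjective hψbij.2,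
      Finset.card_image_of_injective _ Ψ.symm.injective]
    exact ha
  have hinj : ∀ x y : ZMod n, F x = F y →
      x = y ∨ (x = 0 ∧ y = ((d : ℕ) : ZMod n)) ∨ (x = ((d : ℕ) : ZMod n) ∧ y = 0) := by
    have hcardZ : Fintype.card (ZMod n) = n := ZMod.card n
    set s : Finset (ZMod n) := Finset.univ.erase ((d : ℕ) : ZMod n) with hsdef
    have h0s : (0 : ZMod n) ∈ s :=
      Finset.mem_erase.mpr ⟨fun hz => hdd0 hz.symm, Finset.mem_univ _⟩
    have hscard : s.card = n - 1 := by
      rw [hsdef, Finset.card_erase_of_mem (Finset.mem_univ _), Finset.card_univ, hcardZ]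
    have himgs : s.image F = Finset.univ.image F := by
      apply Finset.Subset.antisymm
      · exact Finset.image_subset_image (Finset.erase_subset _ _)
      · intro z hz
        obtain ⟨w, _, rfl⟩ := Finset.mem_image.mp hz
        by_cases hw : w = ((d : ℕ) : ZMod n)
        · subst hw
          exact Finset.mem_image.mpr ⟨0, h0s, (hFd.symm)⟩
        · exact Finset.mem_image.mpr ⟨w, Finset.mem_erase.mpr ⟨hw, Finset.mem_univ _⟩, rfl⟩
    have hinjOn : Set.InjOn F ↑s :=
      Finset.injOn_of_card_image_eq (by rw [himgs, hcardF, hscard])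
    intro x y hxy
    by_cases hx : x = ((d : ℕ) : ZMod n)
    · by_cases hy : y = ((d : ℕ) : ZMod n)
      · exact Or.inl (hx.trans hy.symm)
      · right; right
        refine ⟨hx, ?_⟩
        have hys : y ∈ s := Finset.mem_erase.mpr ⟨hy, Finset.mem_univ _⟩
        have hFy : F y = F 0 := by rw [← hxy, hx, hFd]
        exact hinjOn (Finset.mem_coe.mpr hys) (Finset.mem_coe.mpr h0s) hFy
    · by_cases hy : y = ((d : ℕ) : ZMod n)
      · right; left
        refine ⟨?_, hy⟩
        have hxs : x ∈ s := Finset.mem_erase.mpr ⟨hx, Finset.mem_univ _⟩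
        have hFx : F x = F 0 := by rw [hxy, hy, hFd]
        exact hinjOn (Finset.mem_coe.mpr hxs) (Finset.mem_coe.mpr h0s) hFx
      · left
        exact hinjOn (Finset.mem_coe.mpr (Finset.mem_erase.mpr ⟨hx, Finset.mem_univ _⟩))
          (Finset.mem_coe.mpr (Finset.mem_erase.mpr ⟨hy, Finset.mem_univ _⟩)) hxy
  -- case (i) normal form
  have hcasei : ∀ m : ZMod n, d ≤ n + m.val →
      F ((m.val : ℕ) : ZMod n) = F 0 + ((n + m.val - d : ℕ) : ZMod n) →
      F m = F 0 + m - ((d : ℕ) : ZMod n) := by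
    intro m hle he
    rw [cast_val] at he
    have hcs : ((n + m.val - d : ℕ) : ZMod n) = m - ((d : ℕ) : ZMod n) := by
      rw [Nat.cast_sub hle, Nat.cast_add, ZMod.natCast_self, zero_add, cast_val]
    rw [hcs] at he
    rw [he]; ring
  have hFne0 : ∀ m : ZMod n, m ≠ 0 → m ≠ ((d : ℕ) : ZMod n) → F m ≠ F 0 := by
    intro m hm0 hmd hc
    rcases hinj m 0 hc with h' | ⟨h', _⟩ | ⟨h', _⟩
    · exact hm0 h'
    · exact hm0 h'
    · exact hmd h'
  have hst2 : ∀ m : ZMod n, m ≠ 0 → d ∣ m.val →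
      F m = F 0 + m - ((d : ℕ) : ZMod n) := by
    intro m hm0 hdv
    have hmvpos : 0 < m.val := Nat.pos_of_ne_zero (fun hz => hm0 ((ZMod.val_eq_zero _).mp hz))
    have hmvlt : m.val < n := ZMod.val_lt m
    rcases h m.val hmvpos hmvlt with hi | ⟨hnd, _⟩
    · have hdle : d ≤ m.val := Nat.le_of_dvd hmvpos hdv
      exact hcasei m (by omega) (htr1 m.val hi)
    · exact absurd hdv hnd
  have hst : ∀ m : ZMod n, m ≠ 0 → m ≠ ((d : ℕ) : ZMod n) → ¬ d ∣ m.val →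
      F m = F 0 + m - ((d : ℕ) : ZMod n) ∨
      ∃ j : ℕ, 1 ≤ j ∧ j * d < n ∧
        (F m = F 0 + ((j * d : ℕ) : ZMod n) ∨ F m = F 0 - ((j * d : ℕ) : ZMod n)) := by
    intro m hm0 hmd hndv
    have hmvpos : 0 < m.val := Nat.pos_of_ne_zero (fun hz => hm0 ((ZMod.val_eq_zero _).mp hz))
    have hmvlt : m.val < n := ZMod.val_lt m
    rcases h m.val hmvpos hmvlt with hi | ⟨hnd, r, hrn, hrd, hc⟩
    · rcases le_or_gt d (n + m.val) with hle | hlt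
      · exact Or.inl (hcasei m hle (htr1 m.val hi))
      · exfalso
        have he := htr1 m.val hi
        rw [cast_val] at he
        have hz : n + m.val - d = 0 := by omega
        rw [hz, Nat.cast_zero, add_zero] at he
        exact hFne0 m hm0 hmd he
    · right
      have hjr : r / d * d = r := Nat.div_mul_cancel hrd
      refine ⟨r / d, ?_, by rw [hjr]; exact hrn, ?_⟩
      · rcases Nat.eq_zero_or_pos (r / d) with hj0 | hj1
        · exfalso
          have hr0 : r = 0 := by rw [← hjr, hj0, zero_mul]
          subst hr0
          rcases hc with hc | hc
          · have he := htr2a m.val 0 hc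
            rw [cast_val, Nat.cast_zero, add_zero] at he
            exact hFne0 m hm0 hmd he.symm
          · have he := htr2b m.val 0 hc
            rw [cast_val, Nat.cast_zero, add_zero] at he
            exact hFne0 m hm0 hmd he
        · exact hj1
      · rcases hc with hc | hc
        · left
          have he := htr2a m.val r hc
          rw [cast_val] at he
          rw [← he, hjr]
        · right
          have he := htr2b m.val r hc
          rw [cast_val] at he
          rw [hjr]
          rw [eq_sub_iff_add_eq]
          exact he
  -- apply the core lemma
  have hx12 : Ψ.symm s₁ ≠ Ψ.symm s₂ := fun hc => hs12 (by
    have := congrArg Ψ hc; simpa using this)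
  have hy12 : Ψ.symm t₁ ≠ Ψ.symm t₂ := fun hc => ht12 (by
    have := congrArg Ψ hc; simpa using this)
  have hne1 : ¬(Ψ.symm s₁ = Ψ.symm t₁ ∧ Ψ.symm s₂ = Ψ.symm t₂) := by
    rintro ⟨e1, e2⟩
    apply hST
    have g1 : s₁ = t₁ := by have := congrArg Ψ e1; simpa using this
    have g2 : s₂ = t₂ := by have := congrArg Ψ e2; simpa using this
    rw [g1, g2]
  have hne2 : ¬(Ψ.symm s₁ = Ψ.symm t₂ ∧ Ψ.symm s₂ = Ψ.symm t₁) := by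
    rintro ⟨e1, e2⟩
    apply hST
    have g1 : s₁ = t₂ := by have := congrArg Ψ e1; simpa using this
    have g2 : s₂ = t₁ := by have := congrArg Ψ e2; simpa using this
    rw [g1, g2, Finset.pair_comm]
  obtain ⟨L, tt, hXor⟩ := combinat d hcop h1 hd F hFd hinj hst2 hst
    (Ψ.symm s₁) (Ψ.symm s₂) (Ψ.symm t₁) (Ψ.symm t₂) hx12 hy12 hne1 hne2
  -- build the distinguishing word
  have hdw_word : ∀ (L' : List ℕ) (i : ZMod n),
      dw δ (ψ i) (wordOf a b L') = ψ (evo F L' i) := by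
    intro L'
    induction L' with
    | nil => intro i; rfl
    | cons t L' ih =>
      intro i
      show dw δ (ψ i) (List.replicate t b ++ a :: wordOf a b L') = _
      rw [hdw_append, hdw_repl, hdw_cons, hψF, ih]
      rfl
  set u : List A := wordOf a b L ++ (List.replicate tt b ++ [a]) with hudef
  refine ⟨u, ?_⟩
  have himage : ∀ z : Q, dw δ z u = ψ (F (evo F L (Ψ.symm z) + (tt : ℕ))) := by
    intro z
    conv_lhs => rw [show z = ψ (Ψ.symm z) from (Equiv.apply_symm_apply Ψ z).symm]
    rw [hudef, hdw_append, hdw_word, hdw_blk]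
  have hpair1 : ∀ u' v' : Q, (({u', v'} : Finset Q).card = 1) ↔ u' = v' := by
    intro u' v'
    constructor
    · intro hcard
      by_contra hne
      rw [Finset.card_insert_of_notMem (by simp [hne]), Finset.card_singleton] at hcard
      omega
    · intro hEq; subst hEq; simp
  have hSim : ({s₁, s₂} : Finset Q).image (fun z => dw δ z u) =
      {ψ (F (evo F L (Ψ.symm s₁) + (tt : ℕ))), ψ (F (evo F L (Ψ.symm s₂) + (tt : ℕ)))} := by
    rw [Finset.image_insert, Finset.image_singleton, himage, himage]
  have hTim : ({t₁, t₂} : Finset Q).image (fun z => dw δ z u) =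
      {ψ (F (evo F L (Ψ.symm t₁) + (tt : ℕ))), ψ (F (evo F L (Ψ.symm t₂) + (tt : ℕ)))} := by
    rw [Finset.image_insert, Finset.image_singleton, himage, himage]
  show Xor' _ _
  rw [hSim, hTim, hpair1, hpair1, hψinj.eq_iff, hψinj.eq_iff]
  exact hXor
end

section
/- For odd n > 5, the automaton K_n = ({a,b}, [n], δ) with δ(i,b) = i+1 for i < n-1, δ(n-1,b) = 0, δ(i,a) = i+1 for 1 ≤ i ≤ n-3, δ(n-1,a) = 0, δ(n-2,a) = 1, δ(0,a) = 3, is completely reachable. -/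
open Finset

universe u v

variable {Q : Type u} {A : Type v}

/-- The transition function of the automaton `K_n`; the letter `true` is `b`
(the cyclic permutation) and `false` is `a`. -/
def Kdelta (n : ℕ) [NeZero n] (i : Fin n) (c : Bool) : Fin n :=
  if c then i + 1
  else if i.val = 0 then ⟨3 % n, Nat.mod_lt 3 (NeZero.pos n)⟩
  else if i.val = n - 1 then ⟨0, NeZero.pos n⟩
  else if i.val = n - 2 then ⟨1 % n, Nat.mod_lt 1 (NeZero.pos n)⟩
  else i + 1

/-!
The letter `b` acts on `Fin n` as `q ↦ q + 1`, while `a` sends both `0` and `2` to `3` and misses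
only `n - 1`. So a set containing `3` but not `n - 1` is the image under `a` of its preimage, which
is strictly larger. A power of `b` moves any nonempty proper set `S` into this position: as `n`
is odd, `-4` generates `ℤ/n`, so some `s ∈ S` has `s - 4 ∉ S`, and translating by `3 - s` sends
`s` to `3` and `s - 4` to `n - 1`. Descending from the full set, the image of the empty word, every
nonempty set is reached.
-/

open scoped Fin.CommRing Fin.NatCast

section Automaton

variable [Fintype Q] [DecidableEq Q] (δ : Q → A → Q)

lemma image_dw_append (w v : List A) :
    univ.image (fun q => dw δ q (w ++ v)) =
      (univ.image (fun q => dw δ q w)).image (fun q => dw δ q v) := by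
  rw [image_image]
  exact image_congr fun q _ => List.foldl_append

theorem complReach_of_exists_card_lt
    (h : ∀ S : Finset Q, S.Nonempty → S ≠ univ →
      ∃ T : Finset Q, S.card < T.card ∧ ∃ w : List A, T.image (fun q => dw δ q w) = S) :
    complReach δ := by
  intro S hS
  induction hm : Fintype.card Q - S.card using Nat.strong_induction_on generalizing S with
  | _ m ih =>
    by_cases hSu : S = univ
    · exact ⟨[], by simp [dw, hSu]⟩
    obtain ⟨T, hST, w, hTw⟩ := h S hS hSu
    have hT : T.Nonempty := card_pos.mp (by omega)
    have hTQ : T.card ≤ Fintype.card Q := card_le_univ T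
    obtain ⟨v, hv⟩ := ih _ (by omega) T hT rfl
    exact ⟨v ++ w, by rw [image_dw_append, hv, hTw]⟩

end Automaton

lemma exists_card_lt_image_eq {α β : Type*} [Fintype α] [DecidableEq α] [DecidableEq β]
    (f : α → β) (S : Finset β) (hS : ∀ y ∈ S, ∃ x, f x = y) {p q : α} (hpq : p ≠ q)
    (hfpq : f p = f q) (hp : f p ∈ S) :
    ∃ T : Finset α, S.card < T.card ∧ T.image f = S := by
  set T := univ.filter (fun x => f x ∈ S)
  have hTS : T.image f = S := by
    ext y
    simp only [T, mem_image, mem_filter, mem_univ, true_and]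
    exact ⟨fun ⟨x, hx, hxy⟩ => hxy ▸ hx,
      fun hy => (hS y hy).imp fun x hx => ⟨by rwa [hx], hx⟩⟩
  have hnotInj : ¬ Set.InjOn f T := fun hinj =>
    hpq (hinj (by simpa [T] using hp) (by simpa [T, ← hfpq] using hp) hfpq)
  refine ⟨T, ?_, hTS⟩
  rw [← hTS]
  exact lt_of_le_of_ne card_image_le (mt card_image_iff.mp hnotInj)

lemma exists_add_notMem {G : Type*} [AddGroup G] [Fintype G] [DecidableEq G] (g : G)
    (hg : ∀ x : G, ∃ k : ℕ, k • g = x) (S : Finset G) (hS : S.Nonempty) (hSu : S ≠ univ) :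
    ∃ s ∈ S, s + g ∉ S := by
  by_contra! hclosed
  obtain ⟨s₀, hs₀⟩ := hS
  have hmul : ∀ k : ℕ, s₀ + k • g ∈ S := by
    intro k
    induction k with
    | zero => simpa using hs₀
    | succ k ih => simpa [succ_nsmul, add_assoc] using hclosed _ ih
  refine hSu (eq_univ_of_forall fun x => ?_)
  obtain ⟨k, hk⟩ := hg (-s₀ + x)
  simpa [hk] using hmul k

lemma isUnit_two_of_odd_of_natCast_eq_zero {R : Type*} [CommRing R] {n : ℕ} (hodd : Odd n)
    (hn : (n : R) = 0) : IsUnit (2 : R) := by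
  refine IsUnit.of_mul_eq_one (((n + 1) / 2 : ℕ) : R) ?_
  have h : 2 * ((n + 1) / 2) = n + 1 := Nat.two_mul_div_two_of_even hodd.add_one
  have := congrArg (fun m : ℕ => (m : R)) h
  push_cast at this
  rw [this, hn, zero_add]

section Kn

variable {n : ℕ} [NeZero n]

lemma Fin.exists_nsmul_eq_of_isUnit {u : Fin n} (hu : IsUnit u) (x : Fin n) :
    ∃ k : ℕ, k • u = x := by
  obtain ⟨v, rfl⟩ := hu
  refine ⟨(x * ↑v⁻¹ : Fin n).val, ?_⟩
  rw [nsmul_eq_mul, Fin.cast_val_eq_self, mul_assoc, Units.inv_mul, mul_one]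

lemma dw_Kdelta_replicate_true (q : Fin n) (j : ℕ) :
    dw (Kdelta n) q (List.replicate j true) = q + j := by
  induction j generalizing q with
  | zero => simp [dw]
  | succ j ih =>
    rw [List.replicate_succ]
    change dw (Kdelta n) (q + 1) (List.replicate j true) = _
    rw [ih]
    push_cast
    ring

lemma Kdelta_false_val (hn : 3 < n) (q : Fin n) :
    (Kdelta n q false).val = if q.val = 0 then 3 else if q.val = n - 1 then 0
      else if q.val = n - 2 then 1 else q.val + 1 := by
  have hq := q.isLt
  simp only [Kdelta, Bool.false_eq_true, if_false]
  split_ifs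
  · exact Nat.mod_eq_of_lt hn
  · rfl
  · exact Nat.mod_eq_of_lt (by omega)
  · rw [Fin.val_add, Fin.val_one', Nat.mod_eq_of_lt (show 1 < n by omega),
      Nat.mod_eq_of_lt (by omega)]

lemma exists_Kdelta_false_eq (hn : 3 < n) (y : Fin n) (hy : y ≠ -1) :
    ∃ x, Kdelta n x false = y := by
  have hyv : y.val ≠ n - 1 := by
    contrapose! hy
    rw [eq_neg_iff_add_eq_zero]
    ext
    rw [Fin.val_add, Fin.val_one', hy, Nat.mod_eq_of_lt (show 1 < n by omega)]
    simp [Nat.sub_add_cancel (show 1 ≤ n by omega)]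
  have hyn := y.isLt
  clear hy
  obtain ⟨x, hx⟩ : ∃ x : Fin n,
      (y.val = 0 ∧ x.val = n - 1) ∨ (y.val = 1 ∧ x.val = n - 2) ∨
        (1 < y.val ∧ x.val = y.val - 1) := by
    by_cases h0 : y.val = 0
    · exact ⟨⟨n - 1, by omega⟩, by simp [h0]⟩
    by_cases h1 : y.val = 1
    · exact ⟨⟨n - 2, by omega⟩, by simp [h1]⟩
    · exact ⟨⟨y.val - 1, by omega⟩, by simp; omega⟩
  refine ⟨x, Fin.ext ?_⟩
  rw [Kdelta_false_val hn]
  split_ifs <;> omega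

lemma Kdelta_exists_preimage_card_lt (hn : 4 < n) (S : Finset (Fin n)) (h3 : 3 ∈ S)
    (hS : -1 ∉ S) :
    ∃ T : Finset (Fin n), S.card < T.card ∧ T.image (fun q => Kdelta n q false) = S := by
  have h2v : (2 : Fin n).val = 2 := Fin.val_cast_of_lt (a := 2) (by omega)
  have h3v : (3 : Fin n).val = 3 := Fin.val_cast_of_lt (a := 3) (by omega)
  have h02 : (0 : Fin n) ≠ 2 := Fin.ne_of_val_ne (by rw [Fin.val_zero, h2v]; omega)
  have ha0 : Kdelta n 0 false = 3 := Fin.ext <| by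
    rw [Kdelta_false_val (by omega), h3v, Fin.val_zero, if_pos rfl]
  have ha2 : Kdelta n 2 false = 3 := Fin.ext <| by
    rw [Kdelta_false_val (by omega), h2v, h3v]
    split_ifs <;> omega
  refine exists_card_lt_image_eq _ S (fun y hy => exists_Kdelta_false_eq (by omega) y ?_) h02
    (ha0.trans ha2.symm) (ha0 ▸ h3)
  rintro rfl
  exact hS hy

lemma Kdelta_exists_card_lt (hodd : Odd n) (hn : 5 < n) (S : Finset (Fin n))
    (hS : S.Nonempty) (hSu : S ≠ univ) :
    ∃ T : Finset (Fin n), S.card < T.card ∧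
      ∃ w : List Bool, T.image (fun q => dw (Kdelta n) q w) = S := by
  have hunit : IsUnit (-4 : Fin n) := by
    have h2 := isUnit_two_of_odd_of_natCast_eq_zero hodd (Fin.natCast_self n)
    simpa [show (-4 : Fin n) = -(2 * 2) by norm_num] using h2.mul h2
  obtain ⟨s, hs, hs4⟩ := exists_add_notMem _ (Fin.exists_nsmul_eq_of_isUnit hunit) S hS hSu
  set S' := S.image (· + (3 - s))
  have h3 : (3 : Fin n) ∈ S' := mem_image.mpr ⟨s, hs, by ring⟩
  have hS' : (-1 : Fin n) ∉ S' := by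
    intro hmem
    obtain ⟨x, hx, hx1⟩ := mem_image.mp hmem
    exact hs4 (by convert hx using 1; linear_combination -hx1)
  obtain ⟨T, hcard, hT⟩ := Kdelta_exists_preimage_card_lt (by omega) S' h3 hS'
  refine ⟨T, by rwa [card_image_of_injective _ (add_left_injective _)] at hcard,
    false :: List.replicate (s - 3).val true, ?_⟩
  calc T.image (fun q => dw (Kdelta n) q (false :: List.replicate (s - 3).val true))
      = (T.image (fun q => Kdelta n q false)).image (· + (s - 3)) := by
        rw [image_image]
        refine image_congr fun q _ => ?_
        change dw (Kdelta n) (Kdelta n q false) _ = _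
        rw [dw_Kdelta_replicate_true, Fin.cast_val_eq_self, Function.comp_apply]
    _ = S := by
        rw [hT, image_image]
        refine (image_congr fun x _ => ?_).trans image_id
        change x + (3 - s) + (s - 3) = x
        ring

end Kn

theorem Kn_complReach (n : ℕ) [NeZero n] (hodd : Odd n) (hn : 5 < n) :
    complReach (Kdelta n) :=
  complReach_of_exists_card_lt _ (Kdelta_exists_card_lt hodd hn)
end
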